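/- arXiv:0902.2622 — 4 statements merged into one kernel-verified Lean document; each statement's English description precedes it below -/
import Mathlib

section
/- Let T and S be unitary operators on Hilbert spaces H and K respectively, let α ∈ (1/2, 1], and let P be a bounded operator on H with ‖P‖ ≤ 1. Suppose there is a sequence of integers (nₖ) with T^{nₖ} converging in the weak operator topology to αI + (1-α)P, and that S^{nₖ} converges weakly to 0 (in the sense that ⟨S^{nₖ}g, g'⟩ → 0 for all g, g' ∈ K). Then any bounded operator J : K → H satisfying T J = J S is zero. -/
open Filter
open scoped InnerProductSpace Topology

/-!
Intertwining passes to all powers, so `T^{nₖ} J g = J S^{nₖ} g`, which tends weakly to `0`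
because `J` is bounded. Comparing weak limits, `(αI + (1-α)P) J g = 0`, and `αI + (1-α)P` is
injective since `|1 - α| ‖P‖ < α`.
-/

theorem LinearIsometryEquiv.zpow_apply_of_intertwine {R E F : Type*} [Semiring R]
    [SeminormedAddCommGroup E] [Module R E] [SeminormedAddCommGroup F] [Module R F]
    (T : E ≃ₗᵢ[R] E) (S : F ≃ₗᵢ[R] F) (J : F → E) (hJ : ∀ x, T (J x) = J (S x))
    (m : ℤ) (x : F) : (T ^ m) (J x) = J ((S ^ m) x) := by
  have hJinv : ∀ x, T⁻¹ (J x) = J (S⁻¹ x) := fun x =>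
    T.injective <| by simp [LinearIsometryEquiv.inv_def, hJ]
  induction m using Int.induction_on generalizing x with
  | zero => simp
  | succ i ih => simp only [zpow_add_one, LinearIsometryEquiv.coe_mul, Function.comp_apply, hJ, ih]
  | pred i ih =>
    simp only [zpow_sub_one, LinearIsometryEquiv.coe_mul, Function.comp_apply, hJinv, ih]

theorem ContinuousLinearMap.tendsto_inner_apply_of_tendsto_inner_zero {𝕜 E F : Type*} [RCLike 𝕜]
    [NormedAddCommGroup E] [InnerProductSpace 𝕜 E] [CompleteSpace E]
    [NormedAddCommGroup F] [InnerProductSpace 𝕜 F]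
    (A : E →L[𝕜] F) {u : ℕ → E} (hu : ∀ y, Tendsto (fun k => ⟪u k, y⟫_𝕜) atTop (𝓝 0)) (z : F) :
    Tendsto (fun k => ⟪A (u k), z⟫_𝕜) atTop (𝓝 0) := by
  set y := (InnerProductSpace.toDual 𝕜 E).symm ((innerSL 𝕜 z).comp A)
  have hy : ∀ x, ⟪A x, z⟫_𝕜 = ⟪x, y⟫_𝕜 := fun x => by
    rw [← inner_conj_symm, ← inner_conj_symm x, InnerProductSpace.toDual_symm_apply]
    rfl
  simpa only [hy] using hu y

theorem ContinuousLinearMap.eq_zero_of_smul_add_smul_apply_eq_zero {𝕜 E : Type*} [NontriviallyNormedField 𝕜]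
    [NormedAddCommGroup E] [NormedSpace 𝕜 E] (A : E →L[𝕜] E) (hA : ‖A‖ ≤ 1) {a b : 𝕜}
    (hab : ‖b‖ < ‖a‖) {x : E} (h : a • x + b • A x = 0) : x = 0 := by
  have hle : ‖a‖ * ‖x‖ ≤ ‖b‖ * ‖x‖ :=
    calc ‖a‖ * ‖x‖ = ‖b • A x‖ := by rw [← norm_smul, eq_neg_of_add_eq_zero_left h, norm_neg]
      _ ≤ ‖b‖ * (‖A‖ * ‖x‖) := by rw [norm_smul]; gcongr; exact A.le_opNorm x
      _ ≤ ‖b‖ * ‖x‖ := by gcongr; exact mul_le_of_le_one_left (norm_nonneg x) hA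
  have : ‖x‖ ≤ 0 := le_of_mul_le_mul_left (by linarith) (by linarith : 0 < ‖a‖ - ‖b‖)
  exact norm_le_zero_iff.mp this

theorem stmt1_general {H K : Type*}
    [NormedAddCommGroup H] [InnerProductSpace ℂ H]
    [NormedAddCommGroup K] [InnerProductSpace ℂ K] [CompleteSpace K]
    (T : H ≃ₗᵢ[ℂ] H) (S : K ≃ₗᵢ[ℂ] K)
    (α : ℝ) (hα : 1 / 2 < α)
    (P : H →L[ℂ] H) (hP : ‖P‖ ≤ 1)
    (n : ℕ → ℤ)
    (hT : ∀ f f' : H, Tendsto (fun k => ⟪(T ^ n k) f, f'⟫_ℂ) atTop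
      (𝓝 ⟪(α : ℂ) • f + ((1 : ℂ) - (α : ℂ)) • P f, f'⟫_ℂ))
    (hS : ∀ g g' : K, Tendsto (fun k => ⟪(S ^ n k) g, g'⟫_ℂ) atTop (𝓝 0))
    (J : K →L[ℂ] H) (hJ : ∀ g : K, T (J g) = J (S g)) :
    J = 0 := by
  ext g
  have hlimit : (α : ℂ) • J g + ((1 : ℂ) - (α : ℂ)) • P (J g) = 0 := by
    refine inner_self_eq_zero.mp (tendsto_nhds_unique (hT (J g) _) ?_)
    simpa only [T.zpow_apply_of_intertwine S J hJ] using
      J.tendsto_inner_apply_of_tendsto_inner_zero (hS g) _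
  have hnorm : ‖(1 : ℂ) - (α : ℂ)‖ < ‖(α : ℂ)‖ := by
    rw [← Complex.ofReal_one, ← Complex.ofReal_sub, Complex.norm_real, Complex.norm_real,
      Real.norm_eq_abs, Real.norm_eq_abs, abs_of_pos (by linarith : 0 < α), abs_sub_lt_iff]
    constructor <;> linarith
  exact P.eq_zero_of_smul_add_smul_apply_eq_zero hP hnorm hlimit

/-- If `T^{n_k}` converges weakly to `αI + (1-α)P` with `α > 1/2`, `‖P‖ ≤ 1`,
and `S^{n_k}` converges weakly to `0`, then any bounded operator `J` with `T J = J S`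
vanishes. -/
theorem stmt1 {H K : Type*}
    [NormedAddCommGroup H] [InnerProductSpace ℂ H] [CompleteSpace H]
    [NormedAddCommGroup K] [InnerProductSpace ℂ K] [CompleteSpace K]
    (T : H ≃ₗᵢ[ℂ] H) (S : K ≃ₗᵢ[ℂ] K)
    (α : ℝ) (hα : 1 / 2 < α) (hα1 : α ≤ 1)
    (P : H →L[ℂ] H) (hP : ‖P‖ ≤ 1)
    (n : ℕ → ℤ)
    (hT : ∀ f f' : H, Tendsto (fun k => ⟪(T ^ n k) f, f'⟫_ℂ) atTop
      (𝓝 ⟪(α : ℂ) • f + ((1 : ℂ) - (α : ℂ)) • P f, f'⟫_ℂ))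
    (hS : ∀ g g' : K, Tendsto (fun k => ⟪(S ^ n k) g, g'⟫_ℂ) atTop (𝓝 0))
    (J : K →L[ℂ] H) (hJ : ∀ g : K, T (J g) = J (S g)) :
    J = 0 :=
  stmt1_general T S α hα P hP n hT hS J hJ
end

section
/- Let T be an invertible measure-preserving transformation of a probability space (X, ℬ, μ). If Δ_{nₖ} converges to a joining λ satisfying λ ≥ a_i Δ_i with a_i > 0, then for the shifted sequence mₖ = nₖ - i one has liminf μ(T^{mₖ} A ∩ A) ≥ a_i μ(A) for all A ∈ ℬ, i.e., T is a_i-rigid. -/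
open Filter MeasureTheory
open scoped Topology ENNReal

/-- Let `Δ m` denote the off-diagonal joining `Δ_m(A × B) = μ(T^m A ∩ B)`
(realized as the image of `μ` under `x ↦ (T^{-m} x, x)`).  If `Δ_{n_k}` converges (on
measurable rectangles) to a joining `λ` satisfying `λ ≥ a_i Δ_i` with `a_i > 0`, then for
the shifted sequence `m_k = n_k - i` one has
`liminf μ(T^{m_k} A ∩ A) ≥ a_i μ(A)` for every measurable `A`, i.e. `T` is `a_i`-rigid. -/
theorem stmt7 {X : Type*} [MeasurableSpace X] (μ : Measure X) [IsProbabilityMeasure μ]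
    (T : Equiv.Perm X) (hT : MeasurePreserving T μ μ)
    (hTinv : MeasurePreserving T.symm μ μ)
    (Δ : ℤ → Measure (X × X))
    (hΔ : ∀ m : ℤ, Δ m = Measure.map (fun x => ((T ^ (-m)) x, x)) μ)
    (lam : Measure (X × X)) (n : ℕ → ℤ)
    (hconv : ∀ A B : Set X, MeasurableSet A → MeasurableSet B →
      Tendsto (fun k => Δ (n k) (A ×ˢ B)) atTop (𝓝 (lam (A ×ˢ B))))
    (i : ℤ) (a : ℝ) (ha : 0 < a)
    (hlam : ENNReal.ofReal a • Δ i ≤ lam) :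
    ∀ A : Set X, MeasurableSet A →
      ENNReal.ofReal a * μ A ≤ liminf (fun k => Δ (n k - i) (A ×ˢ A)) atTop := by
  intro A hA
  -- all integer powers of T are measure preserving
  have hMP : ∀ j : ℤ, MeasurePreserving (⇑(T ^ j)) μ μ := by
    intro j
    induction j using Int.induction_on with
    | zero => simpa using MeasurePreserving.id μ
    | succ k ih =>
        have h : T ^ ((k : ℤ) + 1) = T ^ (k : ℤ) * T := zpow_add_one T k
        rw [h, Equiv.Perm.coe_mul]
        exact ih.comp hT
    | pred k ih =>
        have h : T ^ (-(k : ℤ) - 1) = T ^ (-(k : ℤ)) * T⁻¹ := zpow_sub_one T (-(k : ℤ))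
        have hinv : ⇑(T⁻¹) = ⇑T.symm := rfl
        rw [h, Equiv.Perm.coe_mul, hinv]
        exact ih.comp hTinv
  have hΔrect : ∀ (m : ℤ) (A B : Set X), MeasurableSet A → MeasurableSet B →
      Δ m (A ×ˢ B) = μ ((⇑(T ^ (-m)) ⁻¹' A) ∩ B) := by
    intro m A B hA hB
    have hm : Measurable (fun x : X => ((T ^ (-m)) x, x)) :=
      (hMP (-m)).measurable.prodMk measurable_id
    rw [hΔ, Measure.map_apply hm (hA.prod hB)]
    simp [Set.mk_preimage_prod]
  set B : Set X := ⇑(T ^ (-i)) ⁻¹' A with hBdef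
  have hB : MeasurableSet B := (hMP (-i)).measurable hA
  -- shift identity
  have hshift : ∀ k, Δ (n k - i) (A ×ˢ A) = Δ (n k) (A ×ˢ B) := by
    intro k
    rw [hΔrect _ _ _ hA hA, hΔrect _ _ _ hA hB]
    have hs : MeasurableSet ((⇑(T ^ (-(n k - i))) ⁻¹' A) ∩ A) :=
      ((hMP _).measurable hA).inter hA
    rw [← (hMP (-i)).measure_preimage hs.nullMeasurableSet]
    congr 1
    rw [Set.preimage_inter, ← Set.preimage_comp, ← Equiv.Perm.coe_mul, ← zpow_add]
    have h2 : -(n k - i) + -i = -(n k) := by ring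
    rw [h2]
  have hlim : Tendsto (fun k => Δ (n k) (A ×ˢ B)) atTop (𝓝 (lam (A ×ˢ B))) :=
    hconv A B hA hB
  have hliminf : liminf (fun k => Δ (n k - i) (A ×ˢ A)) atTop = lam (A ×ˢ B) := by
    have : (fun k => Δ (n k - i) (A ×ˢ A)) = fun k => Δ (n k) (A ×ˢ B) := funext hshift
    rw [this, hlim.liminf_eq]
  rw [hliminf]
  have hΔi : Δ i (A ×ˢ B) = μ A := by
    rw [hΔrect _ _ _ hA hB, hBdef, Set.inter_self]
    exact (hMP (-i)).measure_preimage hA.nullMeasurableSet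
  calc ENNReal.ofReal a * μ A = (ENNReal.ofReal a • Δ i) (A ×ˢ B) := by
        rw [Measure.smul_apply, smul_eq_mul, hΔi]
    _ ≤ lam (A ×ˢ B) := hlam _
end

section
/- Let T be an ergodic invertible measure-preserving transformation of a standard probability space (X, 𝒜, μ), and S an ergodic invertible measure-preserving transformation of (Y, ℬ, ν), with T × S ergodic on the product. Let J : L²(X,μ) → L²(Y,ν) be a Markov operator intertwining U_T and U_S (J U_T = U_S J, J and J* positive, J𝟙 = 𝟙, J*𝟙 = 𝟙). Suppose there is α ∈ (0,1], a Markov operator P on L²(X,μ), and a sequence (nₖ) such that U_T^{nₖ} → αI + (1-α)P weakly, and suppose S is mixing (⟨U_S^n g, g'⟩ → ν-product limit, i.e., correlations vanish on L²₀). Then αJf + (1-α)JPf = ∫f dμ for all f ∈ L²(X,μ). -/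
/-!
Because `J` intertwines the Koopman operators, `⟪U_S^{n_k} J f, g⟫ = ⟪U_T^{n_k} f, J* g⟫`
converges to `⟪J (α f + (1 - α) P f), g⟫`. For `g` of mean zero, mixing of `S` makes the same
correlations tend to `0` (the constant part of `J f` is fixed by `U_S`), so
`J (α f + (1 - α) P f)` is constant; as `J*` and `P*` fix `𝟙`, that constant is `∫ f dμ`.
-/

open Filter MeasureTheory
open scoped Topology InnerProductSpace

section InnerProductSpace

variable {F : Type*} [NormedAddCommGroup F] [InnerProductSpace ℝ F]

theorem eq_inner_smul_of_inner_eq_zero {e v : F} (he : ⟪e, e⟫_ℝ = 1)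
    (h : ∀ g, ⟪g, e⟫_ℝ = 0 → ⟪v, g⟫_ℝ = 0) : v = ⟪v, e⟫_ℝ • e := by
  set w := v - ⟪v, e⟫_ℝ • e
  have hwe : ⟪w, e⟫_ℝ = 0 := by
    simp only [w, inner_sub_left, real_inner_smul_left, he, mul_one, sub_self]
  have hw : ⟪w, w⟫_ℝ = 0 := by
    rw [inner_sub_left, h w hwe, real_inner_smul_left, real_inner_comm w e, hwe, mul_zero,
      sub_zero]
  exact sub_eq_zero.mp (inner_self_eq_zero.mp hw)

theorem tendsto_inner_pow_apply_of_mixing {U : F →L[ℝ] F} {e : F} (he : ⟪e, e⟫_ℝ = 1)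
    (hUe : U e = e)
    (hmix : ∀ g g' : F, ⟪g, e⟫_ℝ = 0 → ⟪g', e⟫_ℝ = 0 →
      Tendsto (fun m : ℕ => ⟪(U ^ m) g, g'⟫_ℝ) atTop (𝓝 0))
    (v : F) {g : F} (hg : ⟪g, e⟫_ℝ = 0) :
    Tendsto (fun m : ℕ => ⟪(U ^ m) v, g⟫_ℝ) atTop (𝓝 0) := by
  have hv₀ : ⟪v - ⟪v, e⟫_ℝ • e, e⟫_ℝ = 0 := by
    simp only [inner_sub_left, real_inner_smul_left, he, mul_one, sub_self]
  refine (hmix _ g hv₀ hg).congr fun m => ?_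
  have hUme : (U ^ m) e = e := by
    rw [FunLike.coe_pow_eq_iterate, Function.iterate_fixed hUe]
  rw [map_sub, map_smul, hUme, inner_sub_left, real_inner_smul_left, real_inner_comm g e, hg,
    mul_zero, sub_zero]

end InnerProductSpace

theorem intertwining_apply_weakLimit_eq_inner_smul {E F : Type*} [NormedAddCommGroup E]
    [InnerProductSpace ℝ E] [CompleteSpace E] [NormedAddCommGroup F] [InnerProductSpace ℝ F]
    [CompleteSpace F] {UE A : E →L[ℝ] E} {UF : F →L[ℝ] F} {J : E →L[ℝ] F} {e : F}
    (hJ : Function.Semiconj J UE UF) (he : ⟪e, e⟫_ℝ = 1) (hUe : UF e = e)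
    (hmix : ∀ g g' : F, ⟪g, e⟫_ℝ = 0 → ⟪g', e⟫_ℝ = 0 →
      Tendsto (fun m : ℕ => ⟪(UF ^ m) g, g'⟫_ℝ) atTop (𝓝 0))
    {n : ℕ → ℕ} (hn : Tendsto n atTop atTop)
    (hconv : ∀ f g, Tendsto (fun k => ⟪(UE ^ n k) f, g⟫_ℝ) atTop (𝓝 ⟪A f, g⟫_ℝ)) (f : E) :
    J (A f) = ⟪J (A f), e⟫_ℝ • e := by
  refine eq_inner_smul_of_inner_eq_zero he fun g hg => ?_
  have hJpow : ∀ m, J ((UE ^ m) f) = (UF ^ m) (J f) := by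
    intro m
    simp only [FunLike.coe_pow_eq_iterate]
    exact hJ.iterate_right m f
  have hlim : Tendsto (fun k => ⟪(UF ^ n k) (J f), g⟫_ℝ) atTop (𝓝 ⟪J (A f), g⟫_ℝ) := by
    simpa only [ContinuousLinearMap.adjoint_inner_right, hJpow] using
      hconv f (ContinuousLinearMap.adjoint J g)
  exact tendsto_nhds_unique hlim ((tendsto_inner_pow_apply_of_mixing he hUe hmix (J f) hg).comp hn)

namespace MeasureTheory.L2

variable {X : Type*} [MeasurableSpace X] {μ : Measure X}

theorem inner_eq_integral_of_ae_eq_one {one : Lp ℝ 2 μ} (h1 : (one : X → ℝ) =ᵐ[μ] fun _ => 1)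
    (g : Lp ℝ 2 μ) : ⟪g, one⟫_ℝ = ∫ x, g x ∂μ := by
  rw [L2.inner_def]
  refine integral_congr_ae ?_
  filter_upwards [h1] with x hx
  simp [hx]

theorem inner_self_of_ae_eq_one [IsProbabilityMeasure μ] {one : Lp ℝ 2 μ}
    (h1 : (one : X → ℝ) =ᵐ[μ] fun _ => 1) : ⟪one, one⟫_ℝ = 1 := by
  rw [inner_eq_integral_of_ae_eq_one h1, integral_congr_ae h1]
  simp

theorem eq_self_of_ae_eq_comp_of_ae_eq_const {σ : X → X}
    (hσ : Measure.QuasiMeasurePreserving σ μ μ) {U : Lp ℝ 2 μ → Lp ℝ 2 μ}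
    (hU : ∀ g, (U g : X → ℝ) =ᵐ[μ] fun x => g (σ x)) {c : ℝ} {g : Lp ℝ 2 μ}
    (hg : (g : X → ℝ) =ᵐ[μ] fun _ => c) : U g = g := by
  refine Lp.ext ?_
  filter_upwards [hU g, hg, hσ.ae_eq_comp hg] with x hUx hgx hσx
  rw [hUx, hgx]
  exact hσx

end MeasureTheory.L2

theorem stmt12_general {X Y : Type*} [MeasurableSpace X] [MeasurableSpace Y]
    (μ : Measure X) (ν : Measure Y) [IsProbabilityMeasure ν]
    (S : Equiv.Perm Y) (hSinv : MeasurePreserving S.symm ν ν)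
    (UT : Lp ℝ 2 μ →L[ℝ] Lp ℝ 2 μ)
    (US : Lp ℝ 2 ν →L[ℝ] Lp ℝ 2 ν)
    (hUS : ∀ g : Lp ℝ 2 ν, (US g : Y → ℝ) =ᵐ[ν] fun y => g (S.symm y))
    (oneX : Lp ℝ 2 μ) (honeX : (oneX : X → ℝ) =ᵐ[μ] fun _ => 1)
    (oneY : Lp ℝ 2 ν) (honeY : (oneY : Y → ℝ) =ᵐ[ν] fun _ => 1)
    -- J is a Markov operator intertwining U_T and U_S
    (J : Lp ℝ 2 μ →L[ℝ] Lp ℝ 2 ν)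
    (hJint : ∀ f : Lp ℝ 2 μ, J (UT f) = US (J f))
    (hJadjone : ∀ f : Lp ℝ 2 μ, ⟪J f, oneY⟫_ℝ = ⟪f, oneX⟫_ℝ)
    -- P is a Markov operator and U_T^{n_k} → αI + (1-α)P weakly
    (α : ℝ)
    (P : Lp ℝ 2 μ →L[ℝ] Lp ℝ 2 μ)
    (hPadjone : ∀ f : Lp ℝ 2 μ, ⟪P f, oneX⟫_ℝ = ⟪f, oneX⟫_ℝ)
    (n : ℕ → ℕ) (hn : Tendsto n atTop atTop)
    (hconv : ∀ f g : Lp ℝ 2 μ, Tendsto (fun k => ⟪(UT ^ n k) f, g⟫_ℝ) atTop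
      (𝓝 (α * ⟪f, g⟫_ℝ + (1 - α) * ⟪P f, g⟫_ℝ)))
    -- S is mixing: correlations vanish on L²₀
    (hmix : ∀ g g' : Lp ℝ 2 ν, ⟪g, oneY⟫_ℝ = 0 → ⟪g', oneY⟫_ℝ = 0 →
      Tendsto (fun m : ℕ => ⟪(US ^ m) g, g'⟫_ℝ) atTop (𝓝 0)) :
    ∀ f : Lp ℝ 2 μ, α • J f + (1 - α) • J (P f) = (∫ x, f x ∂μ) • oneY := by
  intro f
  set A : Lp ℝ 2 μ →L[ℝ] Lp ℝ 2 μ := α • 1 + (1 - α) • P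
  have hA : ∀ g, A g = α • g + (1 - α) • P g := fun g => rfl
  have hUSone : US oneY = oneY :=
    L2.eq_self_of_ae_eq_comp_of_ae_eq_const hSinv.quasiMeasurePreserving hUS honeY
  have hconvA : ∀ f g, Tendsto (fun k => ⟪(UT ^ n k) f, g⟫_ℝ) atTop (𝓝 ⟪A f, g⟫_ℝ) := by
    simpa only [hA, inner_add_left, real_inner_smul_left] using hconv
  have hJA := intertwining_apply_weakLimit_eq_inner_smul hJint (L2.inner_self_of_ae_eq_one honeY)
    hUSone hmix hn hconvA f
  have hmean : ⟪J (A f), oneY⟫_ℝ = ∫ x, f x ∂μ := by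
    rw [hJadjone, hA, inner_add_left, real_inner_smul_left, real_inner_smul_left, hPadjone,
      ← add_mul, add_sub_cancel, one_mul, L2.inner_eq_integral_of_ae_eq_one honeX]
  rw [← hmean, ← hJA, hA, map_add, map_smul, map_smul]

/-- Let `T`, `S` be ergodic invertible measure-preserving transformations
with `T × S` ergodic, `J` a Markov operator intertwining the Koopman operators `U_T` and
`U_S`, `S` mixing, and suppose `U_T^{n_k} → αI + (1-α)P` weakly for a Markov operator `P`.
Then `αJf + (1-α)JPf = ∫ f dμ` (as a constant function) for every `f ∈ L²(X,μ)`. -/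
theorem stmt12 {X Y : Type*} [MeasurableSpace X] [MeasurableSpace Y]
    (μ : Measure X) [IsProbabilityMeasure μ] (ν : Measure Y) [IsProbabilityMeasure ν]
    (T : Equiv.Perm X) (hT : MeasurePreserving T μ μ) (hTinv : MeasurePreserving T.symm μ μ)
    (S : Equiv.Perm Y) (hS : MeasurePreserving S ν ν) (hSinv : MeasurePreserving S.symm ν ν)
    (hTerg : Ergodic T μ) (hSerg : Ergodic S ν)
    (hprod : Ergodic (Prod.map T S) (μ.prod ν))
    (UT : Lp ℝ 2 μ →L[ℝ] Lp ℝ 2 μ)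
    (hUT : ∀ f : Lp ℝ 2 μ, (UT f : X → ℝ) =ᵐ[μ] fun x => f (T.symm x))
    (US : Lp ℝ 2 ν →L[ℝ] Lp ℝ 2 ν)
    (hUS : ∀ g : Lp ℝ 2 ν, (US g : Y → ℝ) =ᵐ[ν] fun y => g (S.symm y))
    (oneX : Lp ℝ 2 μ) (honeX : (oneX : X → ℝ) =ᵐ[μ] fun _ => 1)
    (oneY : Lp ℝ 2 ν) (honeY : (oneY : Y → ℝ) =ᵐ[ν] fun _ => 1)
    -- J is a Markov operator intertwining U_T and U_S
    (J : Lp ℝ 2 μ →L[ℝ] Lp ℝ 2 ν)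
    (hJint : ∀ f : Lp ℝ 2 μ, J (UT f) = US (J f))
    (hJpos : ∀ f : Lp ℝ 2 μ, 0 ≤ f → 0 ≤ J f)
    (hJone : J oneX = oneY)
    (hJadjone : ∀ f : Lp ℝ 2 μ, ⟪J f, oneY⟫_ℝ = ⟪f, oneX⟫_ℝ)
    -- P is a Markov operator and U_T^{n_k} → αI + (1-α)P weakly
    (α : ℝ) (hα : 0 < α) (hα1 : α ≤ 1)
    (P : Lp ℝ 2 μ →L[ℝ] Lp ℝ 2 μ)
    (hPpos : ∀ f : Lp ℝ 2 μ, 0 ≤ f → 0 ≤ P f)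
    (hPone : P oneX = oneX)
    (hPadjone : ∀ f : Lp ℝ 2 μ, ⟪P f, oneX⟫_ℝ = ⟪f, oneX⟫_ℝ)
    (n : ℕ → ℕ) (hn : Tendsto n atTop atTop)
    (hconv : ∀ f g : Lp ℝ 2 μ, Tendsto (fun k => ⟪(UT ^ n k) f, g⟫_ℝ) atTop
      (𝓝 (α * ⟪f, g⟫_ℝ + (1 - α) * ⟪P f, g⟫_ℝ)))
    -- S is mixing: correlations vanish on L²₀
    (hmix : ∀ g g' : Lp ℝ 2 ν, ⟪g, oneY⟫_ℝ = 0 → ⟪g', oneY⟫_ℝ = 0 →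
      Tendsto (fun m : ℕ => ⟪(US ^ m) g, g'⟫_ℝ) atTop (𝓝 0)) :
    ∀ f : Lp ℝ 2 μ, α • J f + (1 - α) • J (P f) = (∫ x, f x ∂μ) • oneY :=
  stmt12_general μ ν S hSinv UT US hUS oneX honeX oneY honeY J hJint hJadjone α P hPadjone n hn
    hconv hmix
end

section
/- Let U be a unitary operator on a Hilbert space H and suppose (U^{nₖ}) converges in the weak operator topology to the operator V = Σ_{k=0}^∞ 2^{-(k+1)} U^k (the series converging in operator norm). If S is a unitary operator on K with ⟨Sⁿg, g'⟩ → 0 for all g,g' ∈ K as n → ∞, and U has no eigenvalues on its restriction to a U-invariant subspace H₀ with V injective on H₀, then any bounded J : K → H₀ with U J = J S vanishes. -/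
/-!
Write `V x = ∑' m, 2^{-(m+1)} U^m x`. Shifting the series gives `2 V x = x + U (V x)`, so `V` is
injective. Mixing of `S`, transported through the intertwiner `J`, makes `⟪U^p (J g), h⟫ → 0`.
If `n k → ∞` this forces `V (J g) = 0`, hence `J g = 0`. Otherwise `n k = m` infinitely often, so
`V = U^m` and `2 U^m x = x + U^{m+1} x`; as all three vectors have the same norm, strict convexity
gives `U x = x`. For `x = J g` the mixing limit then reads `⟪J g, J g⟫ = 0`.
-/

open Filter
open scoped InnerProductSpace Topology

theorem Nat.tendsto_atTop_or_frequently_eq (n : ℕ → ℕ) :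
    Tendsto n atTop atTop ∨ ∃ m, ∃ᶠ k in atTop, n k = m := by
  by_contra! h
  refine h.1 ?_
  rw [← Nat.cofinite_eq_atTop]
  refine Tendsto.cofinite_of_finite_preimage_singleton fun m => ?_
  have hfin := h.2 m
  rw [← Nat.cofinite_eq_atTop, eventually_cofinite] at hfin
  exact (show {k | n k = m}.Finite by simpa using hfin).to_subtype

namespace LinearIsometryEquiv

variable {E : Type*}

theorem coe_pow {R : Type*} [Semiring R] [SeminormedAddCommGroup E] [Module R E]
    (U : E ≃ₗᵢ[R] E) (p : ℕ) : ⇑(U ^ p) = (⇑U)^[p] :=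
  hom_coe_pow _ rfl (fun _ _ => rfl) U p

theorem summable_smul_pow_apply [NormedAddCommGroup E] [NormedSpace ℂ E] [CompleteSpace E]
    (U : E ≃ₗᵢ[ℂ] E) (x : E) : Summable fun m : ℕ => ((2 : ℂ) ^ (m + 1))⁻¹ • (U ^ m) x := by
  refine Summable.of_norm_bounded ((summable_geometric_two.mul_left 2⁻¹).mul_right ‖x‖) fun m => ?_
  rw [norm_smul, norm_map, norm_inv, norm_pow, Complex.norm_ofNat, pow_succ, mul_inv, one_div,
    inv_pow, mul_comm (_⁻¹ : ℝ)]

theorem two_smul_tsum_eq [NormedAddCommGroup E] [NormedSpace ℂ E] [CompleteSpace E]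
    (U : E ≃ₗᵢ[ℂ] E) (x : E) :
    (2 : ℂ) • ∑' m : ℕ, ((2 : ℂ) ^ (m + 1))⁻¹ • (U ^ m) x =
      x + U (∑' m : ℕ, ((2 : ℂ) ^ (m + 1))⁻¹ • (U ^ m) x) := by
  have hshift : ∀ m : ℕ, ((2 : ℂ) ^ (m + 1 + 1))⁻¹ • (U ^ (m + 1)) x =
      (2 : ℂ)⁻¹ • U (((2 : ℂ) ^ (m + 1))⁻¹ • (U ^ m) x) := by
    intro m
    rw [map_smul, smul_smul, pow_succ' U, coe_mul, Function.comp_apply, pow_succ (2 : ℂ) (m + 1),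
      mul_inv, mul_comm]
  set V := ∑' m : ℕ, ((2 : ℂ) ^ (m + 1))⁻¹ • (U ^ m) x with hVdef
  have hmap : ∑' m : ℕ, U (((2 : ℂ) ^ (m + 1))⁻¹ • (U ^ m) x) = U V :=
    U.toContinuousLinearEquiv.map_tsum.symm
  have hV : V = (2 : ℂ)⁻¹ • x + (2 : ℂ)⁻¹ • U V := by
    conv_lhs => rw [hVdef, (summable_smul_pow_apply U x).tsum_eq_zero_add, tsum_congr hshift,
      tsum_const_smul'', hmap]
    simp
  linear_combination (norm := module) (2 : ℂ) • hV

theorem apply_eq_self_of_two_smul_pow_apply [NormedAddCommGroup E] [NormedSpace ℂ E]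
    [StrictConvexSpace ℝ E] (U : E ≃ₗᵢ[ℂ] E) {x : E} {m : ℕ}
    (hx : (2 : ℂ) • (U ^ m) x = x + U ((U ^ m) x)) : U x = x := by
  have hnorm : ‖x‖ = ‖U ((U ^ m) x)‖ := by rw [norm_map, norm_map]
  have hsum : ‖x + U ((U ^ m) x)‖ = ‖x‖ + ‖U ((U ^ m) x)‖ := by
    rw [← hx, norm_smul, norm_map, Complex.norm_ofNat, ← hnorm, two_mul]
  have hfix := eq_of_norm_eq_of_norm_add_eq hnorm hsum
  have hpow : (U ^ m) x = x := by
    rw [← hfix, ← two_smul ℂ x] at hx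
    exact smul_right_injective E two_ne_zero hx
  calc U x = U ((U ^ m) x) := by rw [hpow]
    _ = x := hfix.symm

end LinearIsometryEquiv

theorem tendsto_inner_pow_apply_of_semiconj {H K : Type*}
    [NormedAddCommGroup H] [InnerProductSpace ℂ H] [CompleteSpace H]
    [NormedAddCommGroup K] [InnerProductSpace ℂ K] [CompleteSpace K]
    {U : H ≃ₗᵢ[ℂ] H} {S : K ≃ₗᵢ[ℂ] K} {J : K →L[ℂ] H}
    (hS : ∀ g g' : K, Tendsto (fun m : ℕ => ⟪(S ^ m) g, g'⟫_ℂ) atTop (𝓝 0))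
    (hJ : ∀ g, U (J g) = J (S g)) (g : K) (h : H) :
    Tendsto (fun p : ℕ => ⟪(U ^ p) (J g), h⟫_ℂ) atTop (𝓝 0) :=
  (hS g (J.adjoint h)).congr fun p => by
    rw [U.coe_pow, S.coe_pow,
      ((Function.Semiconj.iterate_right (fun g => (hJ g).symm) p) g).symm,
      ContinuousLinearMap.adjoint_inner_right]

theorem stmt19_general {H K : Type*}
    [NormedAddCommGroup H] [InnerProductSpace ℂ H] [CompleteSpace H]
    [NormedAddCommGroup K] [InnerProductSpace ℂ K] [CompleteSpace K]
    (U : H ≃ₗᵢ[ℂ] H) (S : K ≃ₗᵢ[ℂ] K)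
    (n : ℕ → ℕ)
    (hV : ∀ f g : H, Tendsto (fun k => ⟪(U ^ n k) f, g⟫_ℂ) atTop
      (𝓝 ⟪∑' m : ℕ, ((2 : ℂ) ^ (m + 1))⁻¹ • (U ^ m) f, g⟫_ℂ))
    (hS : ∀ g g' : K, Tendsto (fun m : ℕ => ⟪(S ^ m) g, g'⟫_ℂ) atTop (𝓝 0))
    (J : K →L[ℂ] H)
    (hJint : ∀ g : K, U (J g) = J (S g)) :
    J = 0 := by
  ext g
  have hmix := tendsto_inner_pow_apply_of_semiconj hS hJint g
  have hres := U.two_smul_tsum_eq (J g)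
  rcases Nat.tendsto_atTop_or_frequently_eq n with hn | ⟨m, hm⟩
  · have hVJ : ∑' m : ℕ, ((2 : ℂ) ^ (m + 1))⁻¹ • (U ^ m) (J g) = 0 :=
      ext_inner_right ℂ fun h => by
        rw [inner_zero_left]
        exact tendsto_nhds_unique (hV (J g) h) ((hmix h).comp hn)
    simpa [hVJ, eq_comm] using hres
  · have hVJ : ∑' m : ℕ, ((2 : ℂ) ^ (m + 1))⁻¹ • (U ^ m) (J g) = (U ^ m) (J g) :=
      ext_inner_right ℂ fun h => tendsto_nhds_unique_of_frequently_eq (hV (J g) h)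
        tendsto_const_nhds (hm.mono fun k hk => by rw [hk])
    rw [hVJ] at hres
    -- provides `StrictConvexSpace ℝ H`
    have : InnerProductSpaceable H := InnerProductSpace.toInnerProductSpaceable ℂ
    have hfix : ∀ p, (U ^ p) (J g) = J g := fun p => by
      rw [U.coe_pow]
      exact Function.IsFixedPt.iterate (U.apply_eq_self_of_two_smul_pow_apply hres) p
    have hself : ⟪J g, J g⟫_ℂ = 0 :=
      tendsto_nhds_unique tendsto_const_nhds ((hmix (J g)).congr fun p => by rw [hfix])
    exact inner_self_eq_zero.mp hself

/-- Suppose the powers `U^{n_k}` of a unitary `U` converge in the weak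
operator topology to `V = ∑_{k≥0} 2^{-(k+1)} U^k`, `S` is a mixing unitary on `K`
(`⟨Sⁿg,g'⟩ → 0`), `H₀` is a `U`-invariant closed subspace on which `U` has no eigenvalues
and `V` is injective.  Then any bounded `J : K → H` with range in `H₀` and `U J = J S`
vanishes.  (Spectral disjointness of the historical Chacon map from mixing maps.) -/
theorem stmt19 {H K : Type*}
    [NormedAddCommGroup H] [InnerProductSpace ℂ H] [CompleteSpace H]
    [NormedAddCommGroup K] [InnerProductSpace ℂ K] [CompleteSpace K]
    (U : H ≃ₗᵢ[ℂ] H) (S : K ≃ₗᵢ[ℂ] K)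
    (n : ℕ → ℕ)
    (hV : ∀ f g : H, Tendsto (fun k => ⟪(U ^ n k) f, g⟫_ℂ) atTop
      (𝓝 ⟪∑' m : ℕ, ((2 : ℂ) ^ (m + 1))⁻¹ • (U ^ m) f, g⟫_ℂ))
    (hS : ∀ g g' : K, Tendsto (fun m : ℕ => ⟪(S ^ m) g, g'⟫_ℂ) atTop (𝓝 0))
    (H₀ : Submodule ℂ H) (hH₀closed : IsClosed (H₀ : Set H))
    (hH₀inv : ∀ x ∈ H₀, U x ∈ H₀)
    (hnoeig : ∀ (c : ℂ), ∀ f ∈ H₀, U f = c • f → f = 0)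
    (hVinj : ∀ f ∈ H₀, (∑' m : ℕ, ((2 : ℂ) ^ (m + 1))⁻¹ • (U ^ m) f) = 0 → f = 0)
    (J : K →L[ℂ] H) (hJrange : ∀ g : K, J g ∈ H₀)
    (hJint : ∀ g : K, U (J g) = J (S g)) :
    J = 0 :=
  stmt19_general U S n hV hS J hJint
end
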